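/- arXiv:2210.05247 — 2 statements merged into one kernel-verified Lean document; each statement's English description precedes it below -/
import Mathlib

section
/- (Theorem 2, training bound with the mixture distribution) If 0 ≤ φ ≤ 1 - 1/(2p), then the classification error satisfies ℓ ≤ 2·exp( -2·(π_inv + (2p(1-φ) - 1)·Σ_{i=1}^D α_i·π_{sp,i})² / (4·Σ_{i=1}^D α_i² + 1) ), where α_i = w_{sp,i}/w_inv. -/
/-!
On the event that `Y`, `Z_sp`, `m_inv`, `m_sp` take their nominal values (which has full
measure), `Y · O = w_inv · V` with the normalised margin `V = m_inv + ∑ α_i m_sp,i Y Z_sp,i`.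
The Chernoff bound `1 - sign V ≤ 2 e^{-tV}` (`t ≥ 0`) gives `ℓ ≤ E e^{-tV}`. Given `Y`, the
summands of `V` are independent, with values in `[0, 1]` and `[-α_i, α_i]`, so Hoeffding's lemma
bounds `E e^{-tV}` by `exp (-t M + t² R / 8)`, where `M = E V = π_inv + (2p(1-φ) - 1) ∑ α_i π_sp,i`
and `R = 4 ∑ α_i² + 1`. Since `φ ≤ 1 - 1/(2p)` means `2p(1-φ) ≥ 1`, we have `M ≥ 0`,
so the optimal `t = 4M/R` is admissible and yields `exp (-2M²/R)`.
-/

open Real MeasureTheory ProbabilityTheory Function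

theorem sum_mul_exp_le_of_mem_Icc {ι : Type*} [Fintype ι] {w x : ι → ℝ} (hw : ∀ i, 0 ≤ w i)
    (hw1 : ∑ i, w i = 1) {a b : ℝ} (hx : ∀ i, x i ∈ Set.Icc a b) (t : ℝ) :
    ∑ i, w i * exp (t * x i) ≤ exp (t * ∑ i, w i * x i + t ^ 2 * (b - a) ^ 2 / 8) := by
  let _ : MeasurableSpace ι := ⊤
  have hsum : ∑ i, ENNReal.ofReal (w i) = 1 := by
    rw [← ENNReal.ofReal_sum_of_nonneg fun i _ => hw i, hw1, ENNReal.ofReal_one]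
  set ν := (PMF.ofFintype _ hsum).toMeasure
  have hint (f : ι → ℝ) : ∫ i, f i ∂ν = ∑ i, w i * f i := by
    simp [ν, PMF.integral_eq_sum, ENNReal.toReal_ofReal (hw _)]
  have hoeff := (hasSubgaussianMGF_of_mem_Icc (μ := ν) (X := x) (a := a) (b := b)
    (measurable_of_finite x).aemeasurable (.of_forall hx)).mgf_le t
  rw [mgf, hint, hint] at hoeff
  set m := ∑ i, w i * x i
  have hc : (((‖b - a‖₊ / 2) ^ 2 : NNReal) : ℝ) * t ^ 2 / 2 = t ^ 2 * (b - a) ^ 2 / 8 := by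
    push_cast
    rw [norm_eq_abs, div_pow, sq_abs]
    ring
  calc ∑ i, w i * exp (t * x i) = exp (t * m) * ∑ i, w i * exp (t * (x i - m)) := by
        rw [Finset.mul_sum]
        refine Finset.sum_congr rfl fun i _ => ?_
        rw [mul_left_comm, ← exp_add]
        ring_nf
    _ ≤ exp (t * m) * exp (t ^ 2 * (b - a) ^ 2 / 8) := by
        gcongr
        rwa [hc] at hoeff
    _ = _ := (exp_add _ _).symm

theorem Fintype.sum_sum_prod_eq_prod_sum_sum {ι κ κ' R : Type*} [Fintype ι] [DecidableEq ι]
    [Fintype κ] [Fintype κ'] [CommSemiring R] (F : ι → κ → κ' → R) :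
    ∑ e : ι → κ, ∑ c : ι → κ', ∏ i, F i (e i) (c i) = ∏ i, ∑ e, ∑ c, F i e c := by
  simp only [Fintype.prod_sum]

def boolSign (b : Bool) : ℝ := if b then 1 else -1

def boolInd (b : Bool) : ℝ := if b then 1 else 0

lemma boolSign_mul_boolSign (y e : Bool) :
    boolSign y * boolSign e = if e = y then 1 else -1 := by
  cases y <;> cases e <;> norm_num [boolSign]

lemma boolSign_injective : Function.Injective boolSign := by
  intro a b
  cases a <;> cases b <;> norm_num [boolSign]

lemma boolInd_injective : Function.Injective boolInd := by
  intro a b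
  cases a <;> cases b <;> norm_num [boolInd]

lemma boolSign_mul_sign (y : Bool) (r : ℝ) :
    boolSign y * Real.sign r = Real.sign (boolSign y * r) := by
  cases y <;> simp [boolSign, Real.sign_neg]

lemma Real.sign_mul_of_pos {c : ℝ} (hc : 0 < c) (r : ℝ) : Real.sign (c * r) = Real.sign r := by
  rcases lt_trichotomy r 0 with hr | rfl | hr
  · rw [Real.sign_of_neg hr, Real.sign_of_neg (mul_neg_of_pos_of_neg hc hr)]
  · rw [mul_zero]
  · rw [Real.sign_of_pos hr, Real.sign_of_pos (mul_pos hc hr)]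

lemma one_sub_sign_mem_Icc {t : ℝ} (ht : 0 ≤ t) (r : ℝ) :
    1 - Real.sign r ∈ Set.Icc 0 (2 * exp (-t * r)) := by
  rcases lt_or_ge 0 r with hr | hr
  · rw [Real.sign_of_pos hr, sub_self]
    exact ⟨le_rfl, by positivity⟩
  · have : 1 ≤ exp (-t * r) := one_le_exp (by nlinarith)
    rcases Real.sign_apply_eq r with h | h | h <;> rw [h] <;> constructor <;> linarith

theorem integral_le_sum_measureReal_mul {Ω S : Type*} [MeasurableSpace Ω] {μ : Measure Ω}
    [IsProbabilityMeasure μ] [Fintype S] {A : S → Set Ω} (hA : ∀ s, MeasurableSet (A s))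
    (hdisj : Pairwise (Disjoint on A)) (hA1 : ∑ s, μ (A s) = 1) {f : Ω → ℝ} {g : S → ℝ}
    (hfg : ∀ s, ∀ ω ∈ A s, f ω ∈ Set.Icc 0 (g s)) :
    ∫ ω, f ω ∂μ ≤ ∑ s, μ.real (A s) * g s := by
  classical
  have hcover : ∀ᵐ ω ∂μ, ∃ s, ω ∈ A s := by
    simp_rw [← Set.mem_iUnion]
    rw [ae_mem_iff_measure_eq (MeasurableSet.iUnion hA).nullMeasurableSet,
      measure_iUnion hdisj hA, tsum_fintype, hA1, measure_univ]
  have hG : ∀ s, ∀ ω ∈ A s, ∑ s', (A s').indicator (fun _ => g s') ω = g s := by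
    intro s ω hω
    rw [Finset.sum_eq_single s (fun s' _ hs' => Set.indicator_of_notMem
      (Set.disjoint_left.1 (hdisj hs'.symm) hω) _) (by simp), Set.indicator_of_mem hω]
  have hint : ∀ s, Integrable ((A s).indicator fun _ => g s) μ :=
    fun s => (integrable_const _).indicator (hA s)
  calc ∫ ω, f ω ∂μ ≤ ∫ ω, ∑ s, (A s).indicator (fun _ => g s) ω ∂μ := by
        refine integral_mono_of_nonneg ?_ (integrable_finsetSum _ fun s _ => hint s) ?_
        · filter_upwards [hcover] with ω ⟨s, hs⟩
          exact (hfg s ω hs).1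
        · filter_upwards [hcover] with ω ⟨s, hs⟩
          rw [hG s ω hs]
          exact (hfg s ω hs).2
    _ = ∑ s, μ.real (A s) * g s := by
        rw [integral_finsetSum _ fun s _ => hint s]
        simp [integral_indicator_const _ (hA _)]

noncomputable section

/-- `(y, ε, a, c)` records the values of `(Y, Z_sp, m_inv, m_sp)`: booleans encode `±1` through
`boolSign` and `0/1` through `boolInd`. Under the mixture law `Z_sp,i = Y` with probability
`q = (1 - φ) p`. -/
abbrev Config (D : ℕ) := Bool × (Fin D → Bool) × Bool × (Fin D → Bool)

def lawWeight {D : ℕ} (q πInv : ℝ) (πSp : Fin D → ℝ) : Config D → ℝ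
  | (y, ε, a, c) => 1 / 2 * (∏ i, if ε i = y then q else 1 - q) *
      (if a then πInv else 1 - πInv) * ∏ i, if c i then πSp i else 1 - πSp i

/-- With `α_i = w_sp,i / w_inv`, `Y * O = w_inv * margin α s` on the event that
`(Y, Z_sp, m_inv, m_sp)` takes the values `s`. -/
def margin {D : ℕ} (α : Fin D → ℝ) : Config D → ℝ
  | (y, ε, a, c) => boolInd a + ∑ i, α i * boolInd (c i) * if ε i = y then 1 else -1

/-- Given `Y = y`, the margin is a sum of independent terms `m_inv` and `α_i m_sp,i Y Z_sp,i`;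
these are their moment generating functions at `-t`. -/
def invTermMgf (ρ t : ℝ) : ℝ := ∑ a : Bool, (if a then ρ else 1 - ρ) * exp (-t * boolInd a)

def spTermMgf (q ρ α t : ℝ) (y : Bool) : ℝ :=
  ∑ e : Bool, ∑ c : Bool, (if e = y then q else 1 - q) * (if c then ρ else 1 - ρ) *
    exp (-t * (α * boolInd c * if e = y then 1 else -1))

lemma sum_lawWeight_mul_exp_margin {D : ℕ} (q πInv : ℝ) (πSp α : Fin D → ℝ) (t : ℝ) :
    ∑ s, lawWeight q πInv πSp s * exp (-t * margin α s) =
      ∑ y : Bool, 1 / 2 * invTermMgf πInv t * ∏ i, spTermMgf q (πSp i) (α i) t y := by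
  refine Fintype.sum_prod_type _ |>.trans (Finset.sum_congr rfl fun y _ => ?_)
  have hpoint : ∀ ε a c, lawWeight q πInv πSp (y, ε, a, c) * exp (-t * margin α (y, ε, a, c)) =
      1 / 2 * ((if a then πInv else 1 - πInv) * exp (-t * boolInd a)) *
        ∏ i, (if ε i = y then q else 1 - q) * (if c i then πSp i else 1 - πSp i) *
          exp (-t * (α i * boolInd (c i) * if ε i = y then 1 else -1)) := by
    intro ε a c
    simp only [lawWeight, margin, mul_add, Finset.mul_sum, exp_add, exp_sum,
      Finset.prod_mul_distrib]
    ring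
  simp only [Fintype.sum_prod_type, hpoint, invTermMgf, spTermMgf,
    ← Fintype.sum_sum_prod_eq_prod_sum_sum, Finset.mul_sum, Finset.sum_mul]
  exact Finset.sum_congr rfl fun _ _ => Finset.sum_comm

lemma lawWeight_nonneg {D : ℕ} {q πInv : ℝ} {πSp : Fin D → ℝ} (hq0 : 0 ≤ q) (hq1 : q ≤ 1)
    (hπInv0 : 0 ≤ πInv) (hπInv1 : πInv ≤ 1) (hπSp0 : ∀ i, 0 ≤ πSp i) (hπSp1 : ∀ i, πSp i ≤ 1)
    (s : Config D) : 0 ≤ lawWeight q πInv πSp s := by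
  obtain ⟨y, ε, a, c⟩ := s
  refine mul_nonneg (mul_nonneg (mul_nonneg one_half_pos.le ?_) ?_) ?_
  · exact Finset.prod_nonneg fun i _ => by split_ifs <;> linarith
  · split_ifs <;> linarith
  · exact Finset.prod_nonneg fun i _ => by split_ifs <;> linarith [hπSp0 i, hπSp1 i]

lemma invTermMgf_le {ρ : ℝ} (h0 : 0 ≤ ρ) (h1 : ρ ≤ 1) (t : ℝ) :
    invTermMgf ρ t ≤ exp (-t * ρ + t ^ 2 / 8) := by
  have h := sum_mul_exp_le_of_mem_Icc (w := fun a : Bool => if a then ρ else 1 - ρ)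
    (x := boolInd) (a := 0) (b := 1) (by simp [h0, h1]) (by simp)
    (by simp [boolInd]) (-t)
  refine h.trans_eq ?_
  simp [boolInd]

lemma spTermMgf_le {q ρ α : ℝ} (hq0 : 0 ≤ q) (hq1 : q ≤ 1) (h0 : 0 ≤ ρ) (h1 : ρ ≤ 1) (hα : 0 ≤ α)
    (t : ℝ) (y : Bool) :
    spTermMgf q ρ α t y ≤ exp (-t * (α * ρ * (2 * q - 1)) + t ^ 2 * α ^ 2 / 2) := by
  have h := sum_mul_exp_le_of_mem_Icc
    (w := fun s : Bool × Bool => (if s.1 = y then q else 1 - q) * (if s.2 then ρ else 1 - ρ))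
    (x := fun s => α * boolInd s.2 * if s.1 = y then 1 else -1) (a := -α) (b := α)
    (fun s => by positivity) (by cases y <;> simp [Fintype.sum_prod_type] <;> ring)
    (by rintro ⟨e, c⟩; cases e <;> cases c <;> cases y <;> simp [boolInd, hα]) (-t)
  rw [Fintype.sum_prod_type] at h
  refine h.trans_eq ?_
  cases y <;> simp [Fintype.sum_prod_type, boolInd] <;> ring_nf

lemma spTermMgf_nonneg {q ρ : ℝ} (hq0 : 0 ≤ q) (hq1 : q ≤ 1) (h0 : 0 ≤ ρ) (h1 : ρ ≤ 1)
    (α t : ℝ) (y : Bool) : 0 ≤ spTermMgf q ρ α t y := by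
  unfold spTermMgf
  positivity

lemma invTermMgf_zero (ρ : ℝ) : invTermMgf ρ 0 = 1 := by
  simp [invTermMgf]

lemma spTermMgf_zero (q ρ α : ℝ) (y : Bool) : spTermMgf q ρ α 0 y = 1 := by
  cases y <;> simp [spTermMgf] <;> ring

lemma sum_lawWeight_eq_one {D : ℕ} (q πInv : ℝ) (πSp : Fin D → ℝ) :
    ∑ s, lawWeight q πInv πSp s = 1 := by
  have h := sum_lawWeight_mul_exp_margin q πInv πSp 0 0
  simp only [neg_zero, zero_mul, exp_zero, mul_one] at h
  rw [h]
  simp [invTermMgf_zero, spTermMgf_zero]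

lemma sum_lawWeight_mul_exp_margin_le {D : ℕ} {q πInv : ℝ} {πSp α : Fin D → ℝ}
    (hq0 : 0 ≤ q) (hq1 : q ≤ 1) (hπInv0 : 0 ≤ πInv) (hπInv1 : πInv ≤ 1)
    (hπSp0 : ∀ i, 0 ≤ πSp i) (hπSp1 : ∀ i, πSp i ≤ 1) (hα : ∀ i, 0 ≤ α i) (t : ℝ) :
    ∑ s, lawWeight q πInv πSp s * exp (-t * margin α s) ≤
      exp (-t * (πInv + (2 * q - 1) * ∑ i, α i * πSp i) +
        t ^ 2 * (4 * ∑ i, α i ^ 2 + 1) / 8) := by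
  rw [sum_lawWeight_mul_exp_margin]
  calc ∑ y : Bool, 1 / 2 * invTermMgf πInv t * ∏ i, spTermMgf q (πSp i) (α i) t y
      ≤ ∑ y : Bool, 1 / 2 * exp (-t * πInv + t ^ 2 / 8) *
          ∏ i, exp (-t * (α i * πSp i * (2 * q - 1)) + t ^ 2 * α i ^ 2 / 2) := by
        gcongr with y _ i
        · exact Finset.prod_nonneg fun i _ => spTermMgf_nonneg hq0 hq1 (hπSp0 i) (hπSp1 i) _ t y
        · exact invTermMgf_le hπInv0 hπInv1 t
        · exact fun i _ => spTermMgf_nonneg hq0 hq1 (hπSp0 i) (hπSp1 i) _ t y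
        · exact spTermMgf_le hq0 hq1 (hπSp0 i) (hπSp1 i) (hα i) t y
    _ = exp (-t * πInv + t ^ 2 / 8 +
          ∑ i, (-t * (α i * πSp i * (2 * q - 1)) + t ^ 2 * α i ^ 2 / 2)) := by
        rw [Fintype.sum_bool, exp_add (-t * πInv + t ^ 2 / 8), exp_sum]
        ring
    _ = _ := by
        have : ∑ i, (-t * (α i * πSp i * (2 * q - 1)) + t ^ 2 * α i ^ 2 / 2) =
            -t * (2 * q - 1) * ∑ i, α i * πSp i + t ^ 2 / 2 * ∑ i, α i ^ 2 := by
          rw [Finset.mul_sum, Finset.mul_sum, ← Finset.sum_add_distrib]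
          exact Finset.sum_congr rfl fun i _ => by ring
        rw [this]
        congr 1
        ring

def atom {Ω : Type*} {D : ℕ} (Y : Ω → ℝ) (Z : Fin D → Ω → ℝ) (mInv : Ω → ℝ)
    (mSp : Fin D → Ω → ℝ) : Config D → Set Ω
  | (y, ε, a, c) => {ω | Y ω = boolSign y ∧ (∀ i, Z i ω = boolSign (ε i)) ∧
      mInv ω = boolInd a ∧ ∀ i, mSp i ω = boolInd (c i)}

section Atom

variable {Ω : Type*} {D : ℕ} {Y : Ω → ℝ} {Z : Fin D → Ω → ℝ} {mInv : Ω → ℝ}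
  {mSp : Fin D → Ω → ℝ}

lemma measurableSet_atom [MeasurableSpace Ω] (hY : Measurable Y) (hZ : ∀ i, Measurable (Z i))
    (hmInv : Measurable mInv) (hmSp : ∀ i, Measurable (mSp i)) (s : Config D) :
    MeasurableSet (atom Y Z mInv mSp s) := by
  obtain ⟨y, ε, a, c⟩ := s
  simp only [atom, Set.ofPred_and, Set.ofPred_forall]
  exact (hY (measurableSet_singleton _)).inter
    ((MeasurableSet.iInter fun i => hZ i (measurableSet_singleton _)).inter
      ((hmInv (measurableSet_singleton _)).inter
        (MeasurableSet.iInter fun i => hmSp i (measurableSet_singleton _))))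

lemma pairwise_disjoint_atom : Pairwise (Disjoint on atom Y Z mInv mSp) := by
  rintro ⟨y, ε, a, c⟩ ⟨y', ε', a', c'⟩ hne
  refine Set.disjoint_left.2 fun ω ⟨hy, hε, ha, hc⟩ ⟨hy', hε', ha', hc'⟩ => hne ?_
  rw [boolSign_injective (hy.symm.trans hy'), boolInd_injective (ha.symm.trans ha'),
    funext fun i => boolSign_injective ((hε i).symm.trans (hε' i)),
    funext fun i => boolInd_injective ((hc i).symm.trans (hc' i))]

lemma mul_sign_eq_sign_margin {O : Ω → ℝ} {wInv : ℝ} {wSp : Fin D → ℝ} (hw : 0 < wInv)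
    (hO : ∀ ω, O ω = wInv * mInv ω * Y ω + ∑ i, wSp i * mSp i ω * Z i ω) {s : Config D} {ω : Ω}
    (hω : ω ∈ atom Y Z mInv mSp s) :
    Y ω * Real.sign (O ω) = Real.sign (margin (fun i => wSp i / wInv) s) := by
  obtain ⟨y, ε, a, c⟩ := s
  obtain ⟨hy, hε, ha, hc⟩ := hω
  have hYO : boolSign y * O ω = wInv * margin (fun i => wSp i / wInv) (y, ε, a, c) := by
    simp only [hO, hy, hε, ha, hc, margin, mul_add, Finset.mul_sum]
    congr 1
    · cases y <;> norm_num [boolSign]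
    · refine Finset.sum_congr rfl fun i _ => ?_
      rw [← boolSign_mul_boolSign]
      field_simp
  rw [hy, boolSign_mul_sign, hYO, Real.sign_mul_of_pos hw]

end Atom

end

theorem stmt_7_general
    {Ω : Type*} [MeasurableSpace Ω] (μ : MeasureTheory.Measure Ω)
    [MeasureTheory.IsProbabilityMeasure μ]
    (D : ℕ) (p : ℝ) (hp : 1 / 2 < p) (hp1 : p ≤ 1)
    (φ : ℝ) (hφ0 : 0 ≤ φ)
    (πInv : ℝ) (πSp : Fin D → ℝ)
    (hπInv0 : 0 ≤ πInv) (hπInv1 : πInv ≤ 1)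
    (hπSp0 : ∀ i, 0 ≤ πSp i) (hπSp1 : ∀ i, πSp i ≤ 1)
    (Y : Ω → ℝ) (Z : Fin D → Ω → ℝ) (mInv : Ω → ℝ) (mSp : Fin D → Ω → ℝ)
    (hY : Measurable Y) (hZ : ∀ i, Measurable (Z i))
    (hmInv : Measurable mInv) (hmSp : ∀ i, Measurable (mSp i))
    -- joint law: `Y` uniform on `{-1,1}`; given `Y`, `Z i` i.i.d. with the mixture law;
    -- masks Bernoulli, mutually independent and independent of `(Y, Z)`.
    (hlaw : ∀ (y : Bool) (ε : Fin D → Bool) (a : Bool) (c : Fin D → Bool),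
      μ {ω | Y ω = (if y then (1 : ℝ) else -1) ∧
             (∀ i, Z i ω = (if ε i then (1 : ℝ) else -1)) ∧
             mInv ω = (if a then (1 : ℝ) else 0) ∧
             (∀ i, mSp i ω = (if c i then (1 : ℝ) else 0))} =
        ENNReal.ofReal ((1 / 2) *
          (∏ i, (if ε i = y then (1 - φ) * p else φ + (1 - φ) * (1 - p))) *
          (if a then πInv else 1 - πInv) *
          (∏ i, (if c i then πSp i else 1 - πSp i))))
    (wInv : ℝ) (hwInv : 0 < wInv) (wSp : Fin D → ℝ) (hwSp : ∀ i, 0 < wSp i)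
    (O : Ω → ℝ)
    (hO : ∀ ω, O ω = wInv * mInv ω * Y ω + ∑ i, wSp i * mSp i ω * Z i ω)
    (ℓ : ℝ)
    (hℓ : ℓ = (1 / 2) * ∫ ω, (1 - Y ω * Real.sign (O ω)) ∂μ)
    (hφub : φ ≤ 1 - 1 / (2 * p)) :
    ℓ ≤ 2 * Real.exp
        (-2 * (πInv + (2 * p * (1 - φ) - 1) * ∑ i, (wSp i / wInv) * πSp i) ^ 2 /
          (4 * (∑ i, (wSp i / wInv) ^ 2) + 1)) := by
  have hq : 1 / 2 ≤ (1 - φ) * p := by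
    have := (div_le_iff₀ (by linarith : (0 : ℝ) < 2 * p)).1 (by linarith : 1 / (2 * p) ≤ 1 - φ)
    linarith
  rw [show 2 * p * (1 - φ) - 1 = 2 * ((1 - φ) * p) - 1 by ring]
  set q := (1 - φ) * p
  set α : Fin D → ℝ := fun i => wSp i / wInv
  have hq0 : 0 ≤ q := by linarith
  have hq1 : q ≤ 1 := by nlinarith
  have hα : ∀ i, 0 ≤ α i := fun i => (div_pos (hwSp i) hwInv).le
  have hW := lawWeight_nonneg hq0 hq1 hπInv0 hπInv1 hπSp0 hπSp1
  have hatom (s : Config D) :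
      μ (atom Y Z mInv mSp s) = ENNReal.ofReal (lawWeight q πInv πSp s) := by
    obtain ⟨y, ε, a, c⟩ := s
    refine (hlaw y ε a c).trans (congrArg ENNReal.ofReal ?_)
    simp only [lawWeight, q]
    congr 3
    exact Finset.prod_congr rfl fun i _ => by split_ifs <;> ring
  set M := πInv + (2 * q - 1) * ∑ i, α i * πSp i
  set R := 4 * ∑ i, α i ^ 2 + 1
  have hM : 0 ≤ M := add_nonneg hπInv0 (mul_nonneg (by linarith)
    (Finset.sum_nonneg fun i _ => mul_nonneg (hα i) (hπSp0 i)))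
  have hR : 0 < R := by positivity
  set t := 4 * M / R
  have hint := integral_le_sum_measureReal_mul (μ := μ) (measurableSet_atom hY hZ hmInv hmSp)
    pairwise_disjoint_atom
    (by simp only [hatom, ← ENNReal.ofReal_sum_of_nonneg fun s _ => hW s, sum_lawWeight_eq_one,
      ENNReal.ofReal_one])
    (f := fun ω => 1 - Y ω * Real.sign (O ω)) (g := fun s => 2 * exp (-t * margin α s))
    (fun s ω hω => by
      simpa only [mul_sign_eq_sign_margin hwInv hO hω] using one_sub_sign_mem_Icc (by positivity) _)
  calc ℓ ≤ 1 / 2 * ∑ s, μ.real (atom Y Z mInv mSp s) * (2 * exp (-t * margin α s)) := by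
        rw [hℓ]
        gcongr
    _ = ∑ s, lawWeight q πInv πSp s * exp (-t * margin α s) := by
        simp only [measureReal_def, hatom, ENNReal.toReal_ofReal (hW _), Finset.mul_sum]
        exact Finset.sum_congr rfl fun s _ => by ring
    _ ≤ exp (-t * M + t ^ 2 * R / 8) :=
        sum_lawWeight_mul_exp_margin_le hq0 hq1 hπInv0 hπInv1 hπSp0 hπSp1 hα t
    _ = exp (-2 * M ^ 2 / R) := by
        congr 1
        simp only [t]
        field_simp
        ring
    _ ≤ _ := le_mul_of_one_le_left (exp_pos _).le one_le_two

/-- **Theorem 2, training bound with the mixture distribution.** -/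
theorem stmt_7
    {Ω : Type*} [MeasurableSpace Ω] (μ : MeasureTheory.Measure Ω)
    [MeasureTheory.IsProbabilityMeasure μ]
    (D : ℕ) (hD : 0 < D) (p : ℝ) (hp : 1 / 2 < p) (hp1 : p ≤ 1)
    (φ : ℝ) (hφ0 : 0 ≤ φ) (hφ1 : φ ≤ 1)
    (πInv : ℝ) (πSp : Fin D → ℝ)
    (hπInv0 : 0 ≤ πInv) (hπInv1 : πInv ≤ 1)
    (hπSp0 : ∀ i, 0 ≤ πSp i) (hπSp1 : ∀ i, πSp i ≤ 1)
    (Y : Ω → ℝ) (Z : Fin D → Ω → ℝ) (mInv : Ω → ℝ) (mSp : Fin D → Ω → ℝ)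
    (hY : Measurable Y) (hZ : ∀ i, Measurable (Z i))
    (hmInv : Measurable mInv) (hmSp : ∀ i, Measurable (mSp i))
    -- joint law: `Y` uniform on `{-1,1}`; given `Y`, `Z i` i.i.d. with the mixture law;
    -- masks Bernoulli, mutually independent and independent of `(Y, Z)`.
    (hlaw : ∀ (y : Bool) (ε : Fin D → Bool) (a : Bool) (c : Fin D → Bool),
      μ {ω | Y ω = (if y then (1 : ℝ) else -1) ∧
             (∀ i, Z i ω = (if ε i then (1 : ℝ) else -1)) ∧
             mInv ω = (if a then (1 : ℝ) else 0) ∧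
             (∀ i, mSp i ω = (if c i then (1 : ℝ) else 0))} =
        ENNReal.ofReal ((1 / 2) *
          (∏ i, (if ε i = y then (1 - φ) * p else φ + (1 - φ) * (1 - p))) *
          (if a then πInv else 1 - πInv) *
          (∏ i, (if c i then πSp i else 1 - πSp i))))
    (wInv : ℝ) (hwInv : 0 < wInv) (wSp : Fin D → ℝ) (hwSp : ∀ i, 0 < wSp i)
    (O : Ω → ℝ)
    (hO : ∀ ω, O ω = wInv * mInv ω * Y ω + ∑ i, wSp i * mSp i ω * Z i ω)
    (ℓ : ℝ)
    (hℓ : ℓ = (1 / 2) * ∫ ω, (1 - Y ω * Real.sign (O ω)) ∂μ)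
    (hO0 : μ {ω | O ω = 0} = 0)
    (hφub : φ ≤ 1 - 1 / (2 * p)) :
    ℓ ≤ 2 * Real.exp
        (-2 * (πInv + (2 * p * (1 - φ) - 1) * ∑ i, (wSp i / wInv) * πSp i) ^ 2 /
          (4 * (∑ i, (wSp i / wInv) ^ 2) + 1)) :=
  stmt_7_general μ D p hp hp1 φ hφ0 πInv πSp hπInv0 hπInv1 hπSp0 hπSp1 Y Z mInv mSp hY hZ hmInv hmSp
    hlaw wInv hwInv wSp hwSp O hO ℓ hℓ hφub
end

section
/- (Proposition 1, upper bound on the invariant weight) If 0 < v_j(0) < (1/2)·log(p/(1-p)) for every j, then for all t ≥ 0, u(t) ≤ log( e^{u(0)} + t · Π_{i=1}^D ( p·e^{-v_i(0)} + √(p(1-p)) ) ). -/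
/-!
Since `g' = -h` and `h' = -g`, the quantity `h(v_j) e^u` is conserved along the flow. It is positive
at time `0` because `v_j(0) < ½ log (p / (1 - p))`, so `h(v_j)` stays positive, every `v_j` is
nondecreasing, and `(1 - p) e^{v_j} < p e^{-v_j}` gives `((1 - p) e^{v_j})² < p (1 - p)`. Hence
`g(v_j(t)) ≤ p e^{-v_j(0)} + √(p (1 - p))`, and integrating `(e^u)' = ∏ g(v_i)` gives the bound.
-/

open Real Set Finset

section Ici

variable {f f' : ℝ → ℝ} {a : ℝ}

lemma monotoneOn_Ici_of_hasDerivWithinAt_nonneg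
    (hf : ∀ t ∈ Ici a, HasDerivWithinAt f (f' t) (Ici a) t) (hf' : ∀ t ∈ Ioi a, 0 ≤ f' t) :
    MonotoneOn f (Ici a) :=
  monotoneOn_of_hasDerivWithinAt_nonneg (convex_Ici a)
    (fun t ht => (hf t ht).continuousWithinAt)
    (fun t ht => (hf t (interior_subset ht)).mono interior_subset)
    (by rwa [interior_Ici])

lemma antitoneOn_Ici_of_hasDerivWithinAt_nonpos
    (hf : ∀ t ∈ Ici a, HasDerivWithinAt f (f' t) (Ici a) t) (hf' : ∀ t ∈ Ioi a, f' t ≤ 0) :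
    AntitoneOn f (Ici a) :=
  antitoneOn_of_hasDerivWithinAt_nonpos (convex_Ici a)
    (fun t ht => (hf t ht).continuousWithinAt)
    (fun t ht => (hf t (interior_subset ht)).mono interior_subset)
    (by rwa [interior_Ici])

lemma eq_of_hasDerivWithinAt_Ici_zero (hf : ∀ t ∈ Ici a, HasDerivWithinAt f 0 (Ici a) t) :
    ∀ t ∈ Ici a, f t = f a := fun _ ht =>
  le_antisymm
    (antitoneOn_Ici_of_hasDerivWithinAt_nonpos hf (fun _ _ => le_rfl) self_mem_Ici ht ht)
    (monotoneOn_Ici_of_hasDerivWithinAt_nonneg hf (fun _ _ => le_rfl) self_mem_Ici ht ht)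

end Ici

namespace GradientFlow

noncomputable section

def g (p v : ℝ) : ℝ := p * exp (-v) + (1 - p) * exp v

def h (p v : ℝ) : ℝ := p * exp (-v) - (1 - p) * exp v

variable {p v : ℝ}

lemma hasDerivAt_h : HasDerivAt (h p) (-g p v) v := by
  have := (((hasDerivAt_neg v).exp).const_mul p).sub ((hasDerivAt_exp v).const_mul (1 - p))
  exact this.congr_deriv (by unfold g; ring)

lemma g_nonneg (hp0 : 0 ≤ p) (hp1 : p ≤ 1) : 0 ≤ g p v := by
  have : 0 ≤ 1 - p := by linarith
  unfold g
  positivity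

lemma h_pos_of_lt_half_log (hp0 : 0 < p) (hp1 : p < 1) (hv : v < 1 / 2 * log (p / (1 - p))) :
    0 < h p v := by
  have h1p : 0 < 1 - p := by linarith
  have hexp : exp v * exp v < p / (1 - p) := by
    rw [← exp_add, ← exp_log (by positivity : 0 < p / (1 - p))]
    exact exp_lt_exp.mpr (by linarith)
  rw [lt_div_iff₀ h1p] at hexp
  have hev := exp_pos v
  have hinv : exp (-v) * exp v = 1 := by rw [← exp_add, neg_add_cancel, exp_zero]
  unfold h
  nlinarith

lemma mul_exp_lt_sqrt_of_h_pos (hp1 : p < 1) (hh : 0 < h p v) :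
    (1 - p) * exp v < √(p * (1 - p)) := by
  have h1p : 0 < 1 - p := by linarith
  have hinv : exp v * exp (-v) = 1 := by rw [← exp_add, add_neg_cancel, exp_zero]
  have hsq : ((1 - p) * exp v) ^ 2 < p * (1 - p) := by
    unfold h at hh
    nlinarith [mul_pos (mul_pos h1p (exp_pos v)) hh]
  exact (lt_sqrt (by positivity)).mpr hsq

lemma g_le_of_h_pos {v₀ : ℝ} (hp0 : 0 ≤ p) (hp1 : p < 1) (hv : v₀ ≤ v) (hh : 0 < h p v) :
    g p v ≤ p * exp (-v₀) + √(p * (1 - p)) := by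
  have hexp : p * exp (-v) ≤ p * exp (-v₀) :=
    mul_le_mul_of_nonneg_left (exp_le_exp.mpr (neg_le_neg hv)) hp0
  have := mul_exp_lt_sqrt_of_h_pos hp1 hh
  unfold g
  linarith

end

structure IsSolution {ι : Type*} [Fintype ι] [DecidableEq ι]
    (p : ℝ) (u : ℝ → ℝ) (v : ι → ℝ → ℝ) : Prop where
  hasDerivWithinAt_u : ∀ t ∈ Ici (0 : ℝ),
    HasDerivWithinAt u (exp (-u t) * ∏ i, g p (v i t)) (Ici 0) t
  hasDerivWithinAt_v : ∀ j, ∀ t ∈ Ici (0 : ℝ),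
    HasDerivWithinAt (v j) (exp (-u t) * h p (v j t) * ∏ i ∈ univ.erase j, g p (v i t)) (Ici 0) t

namespace IsSolution

variable {ι : Type*} [Fintype ι] [DecidableEq ι] {p : ℝ} {u : ℝ → ℝ} {v : ι → ℝ → ℝ}

lemma h_mul_exp_eq (hs : IsSolution p u v) (j : ι) :
    ∀ t ∈ Ici (0 : ℝ), h p (v j t) * exp (u t) = h p (v j 0) * exp (u 0) := by
  refine eq_of_hasDerivWithinAt_Ici_zero fun t ht => ?_
  have hF := ((hasDerivAt_h (p := p)).comp_hasDerivWithinAt t (hs.hasDerivWithinAt_v j t ht)).mul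
    (hs.hasDerivWithinAt_u t ht).exp
  refine hF.congr_deriv ?_
  rw [Function.comp_apply, ← mul_prod_erase univ _ (mem_univ j), exp_neg]
  field_simp
  ring

lemma h_pos (hs : IsSolution p u v) {j : ι} (h0 : 0 < h p (v j 0)) :
    ∀ t ∈ Ici (0 : ℝ), 0 < h p (v j t) := fun t ht =>
  pos_of_mul_pos_left (hs.h_mul_exp_eq j t ht ▸ mul_pos h0 (exp_pos _)) (exp_pos _).le

lemma monotoneOn (hs : IsSolution p u v) (hp0 : 0 ≤ p) (hp1 : p ≤ 1) {j : ι}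
    (h0 : 0 < h p (v j 0)) : MonotoneOn (v j) (Ici 0) :=
  monotoneOn_Ici_of_hasDerivWithinAt_nonneg (hs.hasDerivWithinAt_v j) fun t ht =>
    have := hs.h_pos h0 t (mem_Ici.mpr (le_of_lt ht))
    have := prod_nonneg fun i (_ : i ∈ univ.erase j) => g_nonneg (v := v i t) hp0 hp1
    by positivity

lemma exp_le (hs : IsSolution p u v) {C : ℝ} (hC : ∀ t ∈ Ici (0 : ℝ), ∏ i, g p (v i t) ≤ C) :
    ∀ t ∈ Ici (0 : ℝ), exp (u t) ≤ exp (u 0) + t * C := by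
  have hanti : AntitoneOn (fun t => exp (u t) - t * C) (Ici 0) := by
    refine antitoneOn_Ici_of_hasDerivWithinAt_nonpos
      (fun t ht => (hs.hasDerivWithinAt_u t ht).exp.sub ((hasDerivWithinAt_id t _).mul_const C))
      fun t ht => ?_
    rw [← mul_assoc, ← exp_add, add_neg_cancel, exp_zero, one_mul, one_mul, sub_nonpos]
    exact hC t (mem_Ici.mpr (le_of_lt ht))
  intro t ht
  have := hanti self_mem_Ici ht ht
  simp only [zero_mul, sub_zero] at this
  linarith

end IsSolution

end GradientFlow

open GradientFlow

theorem stmt_13_general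
    (D : ℕ) (p : ℝ) (hp : 1 / 2 < p) (hp1 : p < 1)
    (u : ℝ → ℝ) (v : Fin D → ℝ → ℝ)
    -- gradient-flow system on `[0, ∞)`
    (hu : ∀ t ∈ Set.Ici (0 : ℝ),
      HasDerivWithinAt u
        (Real.exp (-u t) * ∏ i, (p * Real.exp (-v i t) + (1 - p) * Real.exp (v i t)))
        (Set.Ici 0) t)
    (hv : ∀ (j : Fin D), ∀ t ∈ Set.Ici (0 : ℝ),
      HasDerivWithinAt (v j)
        (Real.exp (-u t) * (p * Real.exp (-v j t) - (1 - p) * Real.exp (v j t)) *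
          ∏ i ∈ Finset.univ.erase j,
            (p * Real.exp (-v i t) + (1 - p) * Real.exp (v i t)))
        (Set.Ici 0) t)
    (hv0 : ∀ j, 0 < v j 0 ∧ v j 0 < (1 / 2) * Real.log (p / (1 - p))) :
    ∀ t ∈ Set.Ici (0 : ℝ),
      u t ≤ Real.log (Real.exp (u 0) +
        t * ∏ i, (p * Real.exp (-v i 0) + Real.sqrt (p * (1 - p)))) := by
  have hs : IsSolution p u v := ⟨hu, hv⟩
  have hp0 : 0 < p := by linarith
  have hh0 j : 0 < h p (v j 0) := h_pos_of_lt_half_log hp0 hp1 (hv0 j).2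
  have hbound : ∀ s ∈ Ici (0 : ℝ),
      ∏ i, g p (v i s) ≤ ∏ i, (p * exp (-v i 0) + √(p * (1 - p))) := fun s hs' =>
    prod_le_prod (fun i _ => g_nonneg hp0.le hp1.le) fun i _ =>
      g_le_of_h_pos hp0.le hp1 (hs.monotoneOn hp0.le hp1.le (hh0 i) self_mem_Ici hs' hs')
        (hs.h_pos (hh0 i) s hs')
  intro t ht
  have ht0 : 0 ≤ t := ht
  rw [le_log_iff_exp_le (by positivity)]
  exact hs.exp_le hbound t ht

/-- **Proposition 1, upper bound on the invariant weight.** -/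
theorem stmt_13
    (D : ℕ) (hD : 0 < D) (p : ℝ) (hp : 1 / 2 < p) (hp1 : p < 1)
    (u : ℝ → ℝ) (v : Fin D → ℝ → ℝ)
    -- gradient-flow system on `[0, ∞)`
    (hu : ∀ t ∈ Set.Ici (0 : ℝ),
      HasDerivWithinAt u
        (Real.exp (-u t) * ∏ i, (p * Real.exp (-v i t) + (1 - p) * Real.exp (v i t)))
        (Set.Ici 0) t)
    (hv : ∀ (j : Fin D), ∀ t ∈ Set.Ici (0 : ℝ),
      HasDerivWithinAt (v j)
        (Real.exp (-u t) * (p * Real.exp (-v j t) - (1 - p) * Real.exp (v j t)) *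
          ∏ i ∈ Finset.univ.erase j,
            (p * Real.exp (-v i t) + (1 - p) * Real.exp (v i t)))
        (Set.Ici 0) t)
    (hv0 : ∀ j, 0 < v j 0 ∧ v j 0 < (1 / 2) * Real.log (p / (1 - p))) :
    ∀ t ∈ Set.Ici (0 : ℝ),
      u t ≤ Real.log (Real.exp (u 0) +
        t * ∏ i, (p * Real.exp (-v i 0) + Real.sqrt (p * (1 - p)))) :=
  stmt_13_general D p hp hp1 u v hu hv hv0
end
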